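/- Let Q be a 2-dimensional linear subspace of ℝ^4, let p¹ be the orthogonal projection onto Q and p² the orthogonal projection onto the orthogonal complement Qᗮ. Let x, y ∈ ℝ^4 with ‖x‖ = ‖y‖ = 1 and ⟨x,y⟩ = 0. Then A(p¹x, p¹y) + A(p²x, p²y) = 1 if and only if there exist α ∈ [0, π/2] and unit vectors v₁, v₂ ∈ Q with ⟨v₁,v₂⟩ = 0 and unit vectors u₁, u₂ ∈ Qᗮ with ⟨u₁,u₂⟩ = 0 such that x = (cos α)·v₁ + (sin α)·u₁ and y = (cos α)·v₂ + (sin α)·u₂. (Paper's Lemma 5.8, second part: characterization of the unit simple 2-vectors achieving equality.) -/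

import Mathlib

/-! Write `x = a + b` and `y = c + d` with `a, c ∈ Q` and `b, d ∈ Qᗮ`, so that
`‖a‖² + ‖b‖² = ‖c‖² + ‖d‖² = 1`. Each area is at most the product of the two norms, and
`‖a‖‖c‖ + ‖b‖‖d‖ ≤ 1` by Cauchy–Schwarz in `ℝ²`. So the areas sum to `1` exactly when
`a ⊥ c`, `b ⊥ d`, `‖a‖ = ‖c‖` and `‖b‖ = ‖d‖`. Then `α = arccos ‖a‖`, and normalising the
components (or taking any orthonormal pair where a component vanishes) gives `v₁, v₂, u₁, u₂`. -/

open scoped RealInnerProductSpace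

/-- The area of the parallelogram spanned by `u` and `v`, i.e. the norm of the 2-vector
`u ∧ v`. -/
noncomputable def parArea {n : ℕ} (u v : EuclideanSpace ℝ (Fin n)) : ℝ :=
  Real.sqrt (‖u‖ ^ 2 * ‖v‖ ^ 2 - ⟪u, v⟫ ^ 2)

open Module Real

theorem mul_add_mul_le_one {a b c d : ℝ} (hab : a ^ 2 + b ^ 2 = 1) (hcd : c ^ 2 + d ^ 2 = 1) :
    a * c + b * d ≤ 1 := by
  nlinarith [sq_nonneg (a - c), sq_nonneg (b - d)]

theorem mul_add_mul_eq_one_iff {a b c d : ℝ} (hab : a ^ 2 + b ^ 2 = 1)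
    (hcd : c ^ 2 + d ^ 2 = 1) : a * c + b * d = 1 ↔ a = c ∧ b = d := by
  constructor
  · intro h
    have hsq : (a - c) ^ 2 + (b - d) ^ 2 = 0 := by linear_combination hab + hcd - 2 * h
    constructor <;> nlinarith [sq_nonneg (a - c), sq_nonneg (b - d)]
  · rintro ⟨rfl, rfl⟩
    linear_combination hab

theorem exists_mem_Icc_cos_eq_sin_eq {a b : ℝ} (ha : 0 ≤ a) (hb : 0 ≤ b)
    (hab : a ^ 2 + b ^ 2 = 1) : ∃ α ∈ Set.Icc 0 (π / 2), cos α = a ∧ sin α = b := by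
  have ha₁ : a ≤ 1 := by nlinarith [sq_nonneg b]
  refine ⟨arccos a, ⟨arccos_nonneg a, arccos_le_pi_div_two.mpr ha⟩,
    cos_arccos (by linarith) ha₁, ?_⟩
  rw [sin_arccos, show 1 - a ^ 2 = b ^ 2 by linarith, sqrt_sq hb]

section InnerProductSpace

variable {E : Type*} [NormedAddCommGroup E] [InnerProductSpace ℝ E]

theorem real_inner_sq_le_norm_sq_mul_norm_sq (u v : E) : ⟪u, v⟫ ^ 2 ≤ ‖u‖ ^ 2 * ‖v‖ ^ 2 := by
  have h := real_inner_mul_inner_self_le u v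
  rw [real_inner_self_eq_norm_sq, real_inner_self_eq_norm_sq] at h
  linarith

theorem Submodule.exists_orthonormal_pair {K : Submodule ℝ E} (hK : 2 ≤ finrank ℝ K) :
    ∃ v₁ v₂ : E, v₁ ∈ K ∧ v₂ ∈ K ∧ ‖v₁‖ = 1 ∧ ‖v₂‖ = 1 ∧ ⟪v₁, v₂⟫ = 0 := by
  have : FiniteDimensional ℝ K := Module.finite_of_finrank_pos (by omega)
  let b := stdOrthonormalBasis ℝ K
  let i₀ : Fin (finrank ℝ K) := ⟨0, by omega⟩
  let i₁ : Fin (finrank ℝ K) := ⟨1, by omega⟩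
  refine ⟨b i₀, b i₁, (b i₀).2, (b i₁).2, b.orthonormal.1 i₀, b.orthonormal.1 i₁, ?_⟩
  rw [← Submodule.coe_inner]
  exact b.orthonormal.2 (by simp [i₀, i₁])

theorem Submodule.exists_orthonormal_pair_smul_eq {K : Submodule ℝ E} (hK : 2 ≤ finrank ℝ K)
    {a c : E} (ha : a ∈ K) (hc : c ∈ K) (hnorm : ‖a‖ = ‖c‖) (hac : ⟪a, c⟫ = 0) :
    ∃ v₁ v₂ : E, v₁ ∈ K ∧ v₂ ∈ K ∧ ‖v₁‖ = 1 ∧ ‖v₂‖ = 1 ∧ ⟪v₁, v₂⟫ = 0 ∧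
      a = ‖a‖ • v₁ ∧ c = ‖a‖ • v₂ := by
  by_cases ha₀ : a = 0
  · obtain ⟨v₁, v₂, hv₁, hv₂, hnv₁, hnv₂, hv⟩ := exists_orthonormal_pair hK
    have hc₀ : c = 0 := by rwa [ha₀, norm_zero, eq_comm, norm_eq_zero] at hnorm
    exact ⟨v₁, v₂, hv₁, hv₂, hnv₁, hnv₂, hv, by simp [ha₀], by simp [ha₀, hc₀]⟩
  have hna : ‖a‖ ≠ 0 := norm_ne_zero_iff.mpr ha₀
  refine ⟨‖a‖⁻¹ • a, ‖a‖⁻¹ • c, K.smul_mem _ ha, K.smul_mem _ hc, ?_, ?_, ?_, ?_, ?_⟩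
  · rw [norm_smul, norm_inv, norm_norm, inv_mul_cancel₀ hna]
  · rw [norm_smul, norm_inv, norm_norm, hnorm, inv_mul_cancel₀ (hnorm ▸ hna)]
  · simp [real_inner_smul_left, real_inner_smul_right, hac]
  · rw [smul_inv_smul₀ hna]
  · rw [smul_inv_smul₀ hna]

end InnerProductSpace

section parArea

variable {n : ℕ}

theorem parArea_le_norm_mul_norm (u v : EuclideanSpace ℝ (Fin n)) :
    parArea u v ≤ ‖u‖ * ‖v‖ :=
  Real.sqrt_le_iff.mpr ⟨by positivity, by nlinarith [sq_nonneg ⟪u, v⟫]⟩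

theorem parArea_eq_norm_mul_norm_iff {u v : EuclideanSpace ℝ (Fin n)} :
    parArea u v = ‖u‖ * ‖v‖ ↔ ⟪u, v⟫ = 0 := by
  rw [parArea, Real.sqrt_eq_iff_eq_sq
    (sub_nonneg.mpr (real_inner_sq_le_norm_sq_mul_norm_sq u v)) (by positivity),
    mul_pow, sub_eq_self, pow_eq_zero_iff two_ne_zero]

theorem parArea_add_parArea_eq_one_iff {a b c d : EuclideanSpace ℝ (Fin n)}
    (hab : ‖a‖ ^ 2 + ‖b‖ ^ 2 = 1) (hcd : ‖c‖ ^ 2 + ‖d‖ ^ 2 = 1) :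
    parArea a c + parArea b d = 1 ↔ ⟪a, c⟫ = 0 ∧ ⟪b, d⟫ = 0 ∧ ‖a‖ = ‖c‖ ∧ ‖b‖ = ‖d‖ := by
  have hac_le := parArea_le_norm_mul_norm a c
  have hbd_le := parArea_le_norm_mul_norm b d
  have hsum_le := mul_add_mul_le_one hab hcd
  rw [← parArea_eq_norm_mul_norm_iff, ← parArea_eq_norm_mul_norm_iff,
    ← mul_add_mul_eq_one_iff hab hcd]
  constructor
  · intro h
    refine ⟨?_, ?_, ?_⟩ <;> linarith
  · rintro ⟨hac, hbd, hsum⟩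
    linarith

end parArea

theorem stmt5_general (Q : Submodule ℝ (EuclideanSpace ℝ (Fin 4)))
    (hQ : Module.finrank ℝ Q = 2)
    (x y : EuclideanSpace ℝ (Fin 4)) (hx : ‖x‖ = 1) (hy : ‖y‖ = 1) :
    (parArea (Submodule.orthogonalProjection Q x : EuclideanSpace ℝ (Fin 4))
        (Submodule.orthogonalProjection Q y : EuclideanSpace ℝ (Fin 4)) +
      parArea (Submodule.orthogonalProjection Qᗮ x : EuclideanSpace ℝ (Fin 4))
        (Submodule.orthogonalProjection Qᗮ y : EuclideanSpace ℝ (Fin 4)) = 1) ↔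
    ∃ α ∈ Set.Icc (0 : ℝ) (Real.pi / 2),
      ∃ v₁ v₂ u₁ u₂ : EuclideanSpace ℝ (Fin 4),
        v₁ ∈ Q ∧ v₂ ∈ Q ∧ u₁ ∈ Qᗮ ∧ u₂ ∈ Qᗮ ∧
        ‖v₁‖ = 1 ∧ ‖v₂‖ = 1 ∧ ‖u₁‖ = 1 ∧ ‖u₂‖ = 1 ∧
        ⟪v₁, v₂⟫ = 0 ∧ ⟪u₁, u₂⟫ = 0 ∧
        x = Real.cos α • v₁ + Real.sin α • u₁ ∧
        y = Real.cos α • v₂ + Real.sin α • u₂ := by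
  have hQc : 2 ≤ finrank ℝ Qᗮ := by
    have := Q.finrank_add_finrank_orthogonal
    rw [hQ, finrank_euclideanSpace_fin] at this
    omega
  have hx' : ‖Q.starProjection x‖ ^ 2 + ‖Qᗮ.starProjection x‖ ^ 2 = 1 := by
    rw [← Q.norm_sq_eq_add_norm_sq_starProjection, hx, one_pow]
  have hy' : ‖Q.starProjection y‖ ^ 2 + ‖Qᗮ.starProjection y‖ ^ 2 = 1 := by
    rw [← Q.norm_sq_eq_add_norm_sq_starProjection, hy, one_pow]
  simp only [Submodule.coe_orthogonalProjectionOnto_apply]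
  rw [parArea_add_parArea_eq_one_iff hx' hy']
  constructor
  · rintro ⟨hac, hbd, hnac, hnbd⟩
    obtain ⟨α, hα, hcos, hsin⟩ := exists_mem_Icc_cos_eq_sin_eq (norm_nonneg _) (norm_nonneg _) hx'
    obtain ⟨v₁, v₂, hv₁, hv₂, hnv₁, hnv₂, hv, ha, hc⟩ := Q.exists_orthonormal_pair_smul_eq
      hQ.ge (Q.starProjection_apply_mem x) (Q.starProjection_apply_mem y) hnac hac
    obtain ⟨u₁, u₂, hu₁, hu₂, hnu₁, hnu₂, hu, hb, hd⟩ := Qᗮ.exists_orthonormal_pair_smul_eq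
      hQc (Qᗮ.starProjection_apply_mem x) (Qᗮ.starProjection_apply_mem y) hnbd hbd
    refine ⟨α, hα, v₁, v₂, u₁, u₂, hv₁, hv₂, hu₁, hu₂, hnv₁, hnv₂, hnu₁, hnu₂, hv, hu, ?_, ?_⟩
    · rw [hcos, hsin, ← ha, ← hb, Q.starProjection_add_starProjection_orthogonal]
    · rw [hcos, hsin, ← hc, ← hd, Q.starProjection_add_starProjection_orthogonal]
  · rintro ⟨α, -, v₁, v₂, u₁, u₂, hv₁, hv₂, hu₁, hu₂, hnv₁, hnv₂, hnu₁, hnu₂, hv, hu, rfl, rfl⟩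
    simp only [Submodule.starProjection_orthogonal_val,
      Q.eq_starProjection_of_mem_orthogonal' (Q.smul_mem _ hv₁) (Qᗮ.smul_mem _ hu₁) rfl,
      Q.eq_starProjection_of_mem_orthogonal' (Q.smul_mem _ hv₂) (Qᗮ.smul_mem _ hu₂) rfl,
      add_sub_cancel_left]
    simp [real_inner_smul_left, real_inner_smul_right, norm_smul, hv, hu, hnv₁, hnv₂, hnu₁, hnu₂]

/-- Paper's Lemma 5.8, second part.  Let `Q` be a 2-dimensional linear
subspace of `ℝ⁴`, `p¹` the orthogonal projection onto `Q` and `p²` the orthogonal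
projection onto `Qᗮ`, and let `x, y` be an orthonormal pair in `ℝ⁴`.  Then
`|p¹x ∧ p¹y| + |p²x ∧ p²y| = 1` if and only if there exist `α ∈ [0, π/2]`, orthonormal
unit vectors `v₁, v₂ ∈ Q` and orthonormal unit vectors `u₁, u₂ ∈ Qᗮ` with
`x = cos α · v₁ + sin α · u₁` and `y = cos α · v₂ + sin α · u₂`. -/
theorem stmt5 (Q : Submodule ℝ (EuclideanSpace ℝ (Fin 4)))
    (hQ : Module.finrank ℝ Q = 2)
    (x y : EuclideanSpace ℝ (Fin 4)) (hx : ‖x‖ = 1) (hy : ‖y‖ = 1)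
    (hxy : ⟪x, y⟫ = 0) :
    (parArea (Submodule.orthogonalProjection Q x : EuclideanSpace ℝ (Fin 4))
        (Submodule.orthogonalProjection Q y : EuclideanSpace ℝ (Fin 4)) +
      parArea (Submodule.orthogonalProjection Qᗮ x : EuclideanSpace ℝ (Fin 4))
        (Submodule.orthogonalProjection Qᗮ y : EuclideanSpace ℝ (Fin 4)) = 1) ↔
    ∃ α ∈ Set.Icc (0 : ℝ) (Real.pi / 2),
      ∃ v₁ v₂ u₁ u₂ : EuclideanSpace ℝ (Fin 4),
        v₁ ∈ Q ∧ v₂ ∈ Q ∧ u₁ ∈ Qᗮ ∧ u₂ ∈ Qᗮ ∧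
        ‖v₁‖ = 1 ∧ ‖v₂‖ = 1 ∧ ‖u₁‖ = 1 ∧ ‖u₂‖ = 1 ∧
        ⟪v₁, v₂⟫ = 0 ∧ ⟪u₁, u₂⟫ = 0 ∧
        x = Real.cos α • v₁ + Real.sin α • u₁ ∧
        y = Real.cos α • v₂ + Real.sin α • u₂ :=
  stmt5_general Q hQ x y hx hy
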